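/- arXiv:2409.12290 — 4 statements merged into one kernel-verified Lean document; each statement's English description precedes it below -/
import Mathlib

section
/- Let J : ℝⁿ → ℝ be continuously differentiable, coercive (J(θ) → ∞ as ‖θ‖ → ∞), with a unique global minimizer θ* (J(θ*) < J(θ) for all θ ≠ θ*) and ∇J(θ) = 0 if and only if θ = θ*. Define V_θ(e) = J(e + θ*) − J(θ*). Then for every c ≥ 0 the sublevel set {e ∈ ℝⁿ : V_θ(e) ≤ c} is connected. -/
/-!
A sublevel set `K = {f ≤ a}` of a continuous function is closed; if it is also compact, then
each piece of a separation of `K` is compact and open in `K`, so `f` attains its minimum on it,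
and since `f > a` off `K`, this minimizer is a local minimizer of `f` on the whole space.
Two nonempty pieces would therefore carry two distinct local minimizers. For the cost `J`,
coercivity makes the sublevel sets compact, and a local minimizer is a critical point, which
can only be `θ*`. The sets `{V_θ ≤ c}` are translates of the sublevel sets `{J ≤ J θ* + c}`.
-/

open Set Topology

section Sublevel

variable {X : Type*} [TopologicalSpace X] {f : X → ℝ} {a : ℝ}

theorem exists_isLocalMin_mem_sublevel_inter (hf : Continuous f)
    (hK : IsCompact {x | f x ≤ a}) {u : Set X} (hu : IsOpen u)
    (hclosed : IsClosed ({x | f x ≤ a} ∩ u)) (hne : ({x | f x ≤ a} ∩ u).Nonempty) :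
    ∃ p ∈ {x | f x ≤ a} ∩ u, IsLocalMin f p := by
  obtain ⟨p, hp, hpmin⟩ :=
    (hK.of_isClosed_subset hclosed inter_subset_left).exists_isMinOn hne hf.continuousOn
  refine ⟨p, hp, ?_⟩
  filter_upwards [hu.mem_nhds hp.2] with x hxu
  by_cases hxK : f x ≤ a
  · exact hpmin ⟨hxK, hxu⟩
  · exact hp.1.trans (not_le.mp hxK).le

theorem isPreconnected_sublevel_of_subsingleton_isLocalMin (hf : Continuous f)
    (hK : IsCompact {x | f x ≤ a}) (hloc : {p | IsLocalMin f p}.Subsingleton) :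
    IsPreconnected {x | f x ≤ a} := by
  have hKclosed : IsClosed {x | f x ≤ a} := isClosed_le hf continuous_const
  have hpiece : ∀ {u v : Set X}, IsOpen v → {x | f x ≤ a} ⊆ u ∪ v →
      {x | f x ≤ a} ∩ (u ∩ v) = ∅ → IsClosed ({x | f x ≤ a} ∩ u) := by
    intro u v hv hcover hdisj
    convert hKclosed.sdiff hv using 1
    ext x
    constructor
    · rintro ⟨hxK, hxu⟩
      exact ⟨hxK, fun hxv => (eq_empty_iff_forall_notMem.mp hdisj) x ⟨hxK, hxu, hxv⟩⟩
    · rintro ⟨hxK, hxv⟩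
      exact ⟨hxK, (hcover hxK).resolve_right hxv⟩
  rw [isPreconnected_iff_subset_of_disjoint]
  intro u v hu hv hcover hdisj
  by_contra! hsplit
  obtain ⟨y, hyK, hyv⟩ := not_subset.mp hsplit.2
  obtain ⟨z, hzK, hzu⟩ := not_subset.mp hsplit.1
  obtain ⟨p, ⟨hpK, hpu⟩, hp⟩ := exists_isLocalMin_mem_sublevel_inter hf hK hu
    (hpiece hv hcover hdisj) ⟨y, hyK, (hcover hyK).resolve_right hyv⟩
  obtain ⟨q, ⟨-, hqv⟩, hq⟩ := exists_isLocalMin_mem_sublevel_inter hf hK hv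
    (hpiece hu (union_comm u v ▸ hcover) (by rwa [inter_comm v u]))
    ⟨z, hzK, (hcover hzK).resolve_left hzu⟩
  obtain rfl := hloc hp hq
  exact (eq_empty_iff_forall_notMem.mp hdisj) p ⟨hpK, hpu, hqv⟩

end Sublevel

theorem isCompact_sublevel_of_coercive {E : Type*} [NormedAddCommGroup E] [ProperSpace E]
    {f : E → ℝ} (hf : Continuous f)
    (hcoercive : ∀ M : ℝ, ∃ R : ℝ, ∀ x : E, R ≤ ‖x‖ → M ≤ f x) (a : ℝ) :
    IsCompact {x | f x ≤ a} := by
  obtain ⟨R, hR⟩ := hcoercive (a + 1)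
  refine Metric.isCompact_of_isClosed_isBounded (isClosed_le hf continuous_const)
    ((Metric.isBounded_ball (x := 0) (r := R)).subset fun x hx => ?_)
  rw [mem_ball_zero_iff]
  by_contra! hRx
  linarith [hR x hRx, mem_ofPred_eq ▸ hx]

theorem IsLocalMin.gradient_eq_zero {F : Type*} [NormedAddCommGroup F]
    [InnerProductSpace ℝ F] [CompleteSpace F] {f : F → ℝ} {p : F} (h : IsLocalMin f p) : gradient f p = 0 := by
  rw [gradient, h.fderiv_eq_zero, map_zero]

theorem sublevel_sets_connected_general (n : ℕ)
    (J : EuclideanSpace ℝ (Fin n) → ℝ) (θs : EuclideanSpace ℝ (Fin n))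
    (hJ : ContDiff ℝ 1 J)
    (hgrad : ∀ θ, gradient J θ = 0 ↔ θ = θs)
    (hcoercive : ∀ M : ℝ, ∃ R : ℝ, ∀ θ : EuclideanSpace ℝ (Fin n), R ≤ ‖θ‖ → M ≤ J θ)
    (c : ℝ) (hc : 0 ≤ c) :
    IsConnected {e : EuclideanSpace ℝ (Fin n) | J (e + θs) - J θs ≤ c} := by
  have hloc : {p | IsLocalMin J p}.Subsingleton := fun p hp q hq =>
    ((hgrad p).mp hp.gradient_eq_zero).trans ((hgrad q).mp hq.gradient_eq_zero).symm
  have hK : IsPreconnected {θ | J θ ≤ J θs + c} :=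
    isPreconnected_sublevel_of_subsingleton_isLocalMin hJ.continuous
      (isCompact_sublevel_of_coercive hJ.continuous hcoercive _) hloc
  have htranslate : {e : EuclideanSpace ℝ (Fin n) | J (e + θs) - J θs ≤ c}
      = Homeomorph.addRight θs ⁻¹' {θ | J θ ≤ J θs + c} := by
    ext e
    simp only [mem_ofPred_eq, mem_preimage, Homeomorph.coe_addRight]
    constructor <;> intro h <;> linarith
  refine ⟨⟨0, by simpa using hc⟩, ?_⟩
  rw [htranslate]
  exact (Homeomorph.isPreconnected_preimage _).mpr hK

/-- For a `C¹`, coercive cost `J` with unique global minimizer `θ*` whose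
gradient vanishes only at `θ*`, every sublevel set of `V_θ(e) = J(e + θ*) - J(θ*)`
(for `c ≥ 0`) is connected. -/
theorem sublevel_sets_connected (n : ℕ)
    (J : EuclideanSpace ℝ (Fin n) → ℝ) (θs : EuclideanSpace ℝ (Fin n))
    (hJ : ContDiff ℝ 1 J)
    (hmin : ∀ θ, θ ≠ θs → J θs < J θ)
    (hgrad : ∀ θ, gradient J θ = 0 ↔ θ = θs)
    (hcoercive : ∀ M : ℝ, ∃ R : ℝ, ∀ θ : EuclideanSpace ℝ (Fin n), R ≤ ‖θ‖ → M ≤ J θ)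
    (c : ℝ) (hc : 0 ≤ c) :
    IsConnected {e : EuclideanSpace ℝ (Fin n) | J (e + θs) - J θs ≤ c} :=
  sublevel_sets_connected_general n J θs hJ hgrad hcoercive c hc
end

section
/- Let J : ℝⁿ → ℝ be continuously differentiable, let k > 0, ε > 0, and let η_1,…,η_n ≥ 0. Let g : ℝⁿ → ℝⁿ be a function satisfying |g_i(θ) − ∂J/∂θ_i(θ)| ≤ η_i for all θ ∈ ℝⁿ and all i. Suppose θ̄ : [0, ∞) → ℝⁿ and v̄ : [0, ∞) → [0, ∞)ⁿ are functions with θ̄ differentiable and (d/dt)θ̄_i(t) = −k g_i(θ̄(t)) / (√(v̄_i(t)) + ε) for all t ≥ 0 and all i. Then for all t ≥ 0, (d/dt) J(θ̄(t)) ≤ −k Σ_{i=1}^n ( (∂J/∂θ_i(θ̄(t)))² − η_i |∂J/∂θ_i(θ̄(t))| ) / (√(v̄_i(t)) + ε). -/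
/-! By the chain rule, `d/dt J(θ̄ t) = ∑ i, ∂ᵢJ · θ̄ᵢ'`, and each summand is controlled through
`∂ᵢJ · gᵢ = (∂ᵢJ)² + ∂ᵢJ · (gᵢ - ∂ᵢJ) ≥ (∂ᵢJ)² - ηᵢ |∂ᵢJ|`. -/

open Finset

theorem hasDerivAt_euclideanSpace_of_forall_apply {ι : Type*} [Fintype ι]
    {f : ℝ → EuclideanSpace ℝ ι} {f' : ι → ℝ} {t : ℝ}
    (h : ∀ i, HasDerivAt (fun u => f u i) (f' i) t) :
    HasDerivAt f (WithLp.toLp 2 f') t :=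
  (PiLp.continuousLinearEquiv 2 ℝ (fun _ : ι => ℝ)).symm.hasFDerivAt.comp_hasDerivAt t
    (hasDerivAt_pi.mpr h)

theorem HasGradientAt.hasDerivAt_comp_eq_sum {ι : Type*} [Fintype ι]
    {J : EuclideanSpace ℝ ι → ℝ} {G : EuclideanSpace ℝ ι}
    {f : ℝ → EuclideanSpace ℝ ι} {f' : ι → ℝ} {t : ℝ}
    (hJ : HasGradientAt J G (f t)) (hf : ∀ i, HasDerivAt (fun u => f u i) (f' i) t) :
    HasDerivAt (fun u => J (f u)) (∑ i, G i * f' i) t := by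
  have h : HasDerivAt (fun u => J (f u)) (inner ℝ G (WithLp.toLp 2 f')) t :=
    hJ.hasFDerivAt.comp_hasDerivAt t (hasDerivAt_euclideanSpace_of_forall_apply hf)
  simpa [PiLp.inner_apply, mul_comm] using h

theorem sq_sub_mul_abs_le_mul {a b η : ℝ} (h : |b - a| ≤ η) : a ^ 2 - η * |a| ≤ a * b := by
  have : |a * (b - a)| ≤ |a| * η := by
    rw [abs_mul]; exact mul_le_mul_of_nonneg_left h (abs_nonneg a)
  nlinarith [neg_abs_le (a * (b - a))]

theorem mul_neg_mul_div_le_of_abs_sub_le {a b η k d : ℝ} (hk : 0 ≤ k) (hd : 0 ≤ d)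
    (h : |b - a| ≤ η) :
    a * (-k * b / d) ≤ -k * ((a ^ 2 - η * |a|) / d) := by
  rw [mul_div_assoc', mul_div_assoc']
  refine div_le_div_of_nonneg_right ?_ hd
  linarith [mul_le_mul_of_nonneg_left (sq_sub_mul_abs_le_mul h) hk]

theorem cost_derivative_bound_general (n : ℕ)
    (J : EuclideanSpace ℝ (Fin n) → ℝ)
    (hJ : ContDiff ℝ 1 J)
    (k ε : ℝ) (hk : 0 < k) (hε : 0 < ε)
    (η : Fin n → ℝ)
    (g : EuclideanSpace ℝ (Fin n) → EuclideanSpace ℝ (Fin n))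
    (hg : ∀ θ i, |g θ i - gradient J θ i| ≤ η i)
    (θb : ℝ → EuclideanSpace ℝ (Fin n)) (vb : ℝ → Fin n → ℝ)
    (hode : ∀ t, 0 ≤ t → ∀ i,
      HasDerivAt (fun u => θb u i) (-k * g (θb t) i / (Real.sqrt (vb t i) + ε)) t) :
    ∀ t, 0 ≤ t →
      deriv (fun u => J (θb u)) t ≤
        -k * ∑ i, ((gradient J (θb t) i) ^ 2 - η i * |gradient J (θb t) i|) /
          (Real.sqrt (vb t i) + ε) := by
  intro t ht
  have hgrad : HasGradientAt J (gradient J (θb t)) (θb t) :=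
    (hJ.differentiable one_ne_zero).differentiableAt.hasGradientAt
  rw [(hgrad.hasDerivAt_comp_eq_sum (hode t ht)).deriv, mul_sum]
  refine sum_le_sum fun i _ => ?_
  exact mul_neg_mul_div_le_of_abs_sub_le hk.le (by positivity) (hg (θb t) i)

/-- Along a normalized-gradient flow driven by gradient estimates `g` that
approximate the true partial derivatives within tolerances `η i`, the cost decreases at
the stated rate. -/
theorem cost_derivative_bound (n : ℕ)
    (J : EuclideanSpace ℝ (Fin n) → ℝ)
    (hJ : ContDiff ℝ 1 J)
    (k ε : ℝ) (hk : 0 < k) (hε : 0 < ε)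
    (η : Fin n → ℝ) (hη : ∀ i, 0 ≤ η i)
    (g : EuclideanSpace ℝ (Fin n) → EuclideanSpace ℝ (Fin n))
    (hg : ∀ θ i, |g θ i - gradient J θ i| ≤ η i)
    (θb : ℝ → EuclideanSpace ℝ (Fin n)) (vb : ℝ → Fin n → ℝ)
    (hvb : ∀ t, 0 ≤ t → ∀ i, 0 ≤ vb t i)
    (hode : ∀ t, 0 ≤ t → ∀ i,
      HasDerivAt (fun u => θb u i) (-k * g (θb t) i / (Real.sqrt (vb t i) + ε)) t) :
    ∀ t, 0 ≤ t →
      deriv (fun u => J (θb u)) t ≤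
        -k * ∑ i, ((gradient J (θb t) i) ^ 2 - η i * |gradient J (θb t) i|) /
          (Real.sqrt (vb t i) + ε) :=
  cost_derivative_bound_general n J hJ k ε hk hε η g hg θb vb hode
end

section
/- Let J : ℝⁿ → ℝ be continuously differentiable. Fix pairwise distinct positive integers r_1,…,r_n, relative amplitudes α_1,…,α_n with α_i ≠ 0 and Σ_{i=1}^n α_i² = 1, and ω > 0 with period T = 2π/ω. For a_0 > 0 define s_i(t) = α_i a_0 sin(ω r_i t), m_i(t) = (2/(α_i a_0)) sin(ω r_i t), and the average gradient estimate ḡ_i(θ̂) = (1/T) ∫_0^T m_i(t) J(θ̂ + s(t)) dt. Then for every fixed θ̂ ∈ ℝⁿ and every i, ḡ_i(θ̂) → ∂J/∂θ_i(θ̂) as a_0 → 0⁺; that is, for every ε > 0 there exists δ > 0 such that for all a_0 ∈ (0, δ), |ḡ_i(θ̂) − ∂J/∂θ_i(θ̂)| < ε. -/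
/-!
The demodulation signal `mᵢ` averages constants to zero and, by the orthogonality of the
`sin (ω rⱼ t)` over a period, extracts the `i`-th coordinate of any linear function of the dither:
`(1/T) ∫ mᵢ ⟪g, s⟫ = gᵢ`. Hence `ḡᵢ(θ̂) - ∂ᵢJ(θ̂)` is the demodulated average of the first-order
Taylor remainder `J(θ̂ + s) - J(θ̂) - ⟪∇J(θ̂), s⟫`, which is `o(‖s‖) = o(a₀)`, while `|mᵢ| = O(1/a₀)`.
-/

open Real intervalIntegral Function

section PeriodIntegrals

variable {ω : ℝ}

theorem integral_cos_int_mul_period (hω : ω ≠ 0) {k : ℤ} (hk : k ≠ 0) :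
    ∫ t in (0 : ℝ)..2 * π / ω, cos (ω * k * t) = 0 := by
  have hc : ω * k ≠ 0 := mul_ne_zero hω (Int.cast_ne_zero.2 hk)
  have hend : ω * k * (2 * π / ω) = (2 * k : ℤ) * π := by push_cast; field_simp
  rw [integral_comp_mul_left (fun x => cos x) hc, integral_cos, hend, sin_int_mul_pi]
  simp

theorem integral_sin_nat_mul_period (hω : ω ≠ 0) (k : ℕ) :
    ∫ t in (0 : ℝ)..2 * π / ω, sin (ω * k * t) = 0 := by
  rcases eq_or_ne k 0 with rfl | hk
  · simp
  have hc : ω * k ≠ 0 := mul_ne_zero hω (Nat.cast_ne_zero.2 hk)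
  have hend : ω * k * (2 * π / ω) = k * (2 * π) := by field_simp
  rw [integral_comp_mul_left (fun x => sin x) hc, integral_sin, hend, cos_nat_mul_two_pi]
  simp

theorem integral_sin_mul_sin_period (hω : ω ≠ 0) {p q : ℕ} (hpq : p + q ≠ 0) :
    ∫ t in (0 : ℝ)..2 * π / ω, sin (ω * p * t) * sin (ω * q * t) =
      if p = q then π / ω else 0 := by
  have hprod : ∀ t, sin (ω * p * t) * sin (ω * q * t) =
      (cos (ω * ((p - q : ℤ) : ℝ) * t) - cos (ω * ((p + q : ℤ) : ℝ) * t)) / 2 := by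
    intro t
    have hsub : ω * ((p - q : ℤ) : ℝ) * t = ω * p * t - ω * q * t := by push_cast; ring
    have hadd : ω * ((p + q : ℤ) : ℝ) * t = ω * p * t + ω * q * t := by push_cast; ring
    rw [hsub, hadd, cos_sub, cos_add]
    ring
  simp_rw [hprod]
  rw [integral_div, integral_sub ((by fun_prop : Continuous _).intervalIntegrable _ _)
    ((by fun_prop : Continuous _).intervalIntegrable _ _),
    integral_cos_int_mul_period hω (k := p + q) (by omega), sub_zero]
  split_ifs with h
  · subst h
    simp only [sub_self, Int.cast_zero, mul_zero, zero_mul, cos_zero, integral_one]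
    ring
  · rw [integral_cos_int_mul_period hω (by omega), zero_div]

theorem integral_sin_mul_sum_sin_period {ι : Type*} [Fintype ι] (hω : ω ≠ 0) {r : ι → ℕ}
    (hr : Injective r) {i : ι} (hri : r i ≠ 0) (c : ι → ℝ) :
    ∫ t in (0 : ℝ)..2 * π / ω, sin (ω * r i * t) * ∑ j, c j * sin (ω * r j * t) =
      c i * (π / ω) := by
  simp_rw [Finset.mul_sum, mul_left_comm (sin _) (c _)]
  rw [integral_finsetSum fun j _ => (by fun_prop : Continuous _).intervalIntegrable _ _]
  simp_rw [integral_const_mul]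
  rw [Finset.sum_eq_single i]
  · rw [integral_sin_mul_sin_period hω (by omega), if_pos rfl]
  · intro j _ hji
    rw [integral_sin_mul_sin_period hω (by omega), if_neg (hr.ne hji.symm), mul_zero]
  · simp

end PeriodIntegrals

section Dither

variable {ι : Type*}

/-- The dither `s` of amplitude `a₀` is `a₀ • unitDither α r ω`. -/
noncomputable def unitDither (α : ι → ℝ) (r : ι → ℕ) (ω t : ℝ) : EuclideanSpace ℝ ι :=
  WithLp.toLp 2 fun j => α j * sin (ω * r j * t)

variable (α : ι → ℝ) (r : ι → ℕ) (ω : ℝ)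

@[fun_prop]
theorem continuous_unitDither : Continuous (unitDither α r ω) :=
  (PiLp.continuous_toLp 2 _).comp (continuous_pi fun j => by fun_prop)

theorem norm_unitDither_le [Fintype ι] (t : ℝ) : ‖unitDither α r ω t‖ ≤ ‖WithLp.toLp 2 α‖ := by
  rw [EuclideanSpace.norm_eq, EuclideanSpace.norm_eq]
  gcongr with j
  simp only [unitDither, PiLp.toLp_apply, norm_mul]
  exact mul_le_of_le_one_right (norm_nonneg _) (abs_sin_le_one _)

theorem inner_unitDither [Fintype ι] (g : EuclideanSpace ℝ ι) (t : ℝ) :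
    inner ℝ g (unitDither α r ω t) = ∑ j, g j * α j * sin (ω * r j * t) := by
  simp only [unitDither, PiLp.inner_apply, RCLike.inner_apply', conj_trivial]
  exact Finset.sum_congr rfl fun j _ => by ring

end Dither

theorem HasGradientAt.exists_abs_remainder_le {F : Type*} [NormedAddCommGroup F]
    [InnerProductSpace ℝ F] [CompleteSpace F] {f : F → ℝ} {f' x : F} (hf : HasGradientAt f f' x)
    {c : ℝ} (hc : 0 < c) :
    ∃ ρ > 0, ∀ v, ‖v‖ < ρ → |f (x + v) - f x - inner ℝ f' v| ≤ c * ‖v‖ := by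
  obtain ⟨ρ, hρ, hR⟩ :=
    Metric.eventually_nhds_iff.1 ((hasGradientAt_iff_isLittleO_nhds_zero.1 hf).def hc)
  exact ⟨ρ, hρ, fun v hv => hR (by rwa [dist_zero_right])⟩

theorem abs_average_le_of_abs_le {f : ℝ → ℝ} {T C : ℝ} (hT : 0 < T) (hf : ∀ t, |f t| ≤ C) :
    |1 / T * ∫ t in (0 : ℝ)..T, f t| ≤ C := by
  have hbound : |∫ t in (0 : ℝ)..T, f t| ≤ C * |T - 0| :=
    norm_integral_le_of_norm_le_const (f := f) fun t _ => hf t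
  rw [sub_zero, abs_of_pos hT] at hbound
  calc |1 / T * ∫ t in (0 : ℝ)..T, f t| ≤ 1 / T * (C * T) := by
        rw [abs_mul, abs_of_pos (one_div_pos.2 hT)]; gcongr
    _ = C := by field_simp

section Demodulation

variable {ι : Type*} [Fintype ι] {α : ι → ℝ} {r : ι → ℕ} {ω a : ℝ} {i : ι}

theorem integral_demod_mul_inner_smul_unitDither (hω : ω ≠ 0) (hr : Injective r) (hri : r i ≠ 0)
    (hαi : α i ≠ 0) (ha : a ≠ 0) (g : EuclideanSpace ℝ ι) :
    ∫ t in (0 : ℝ)..2 * π / ω,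
        2 / (α i * a) * sin (ω * r i * t) * inner ℝ g (a • unitDither α r ω t) =
      g i * (2 * π / ω) := by
  have hrw : ∀ t, 2 / (α i * a) * sin (ω * r i * t) * inner ℝ g (a • unitDither α r ω t) =
      2 / (α i * a) * a * (sin (ω * r i * t) * ∑ j, (g j * α j) * sin (ω * r j * t)) := by
    intro t
    rw [inner_smul_right, inner_unitDither]
    ring
  simp_rw [hrw]
  rw [integral_const_mul, integral_sin_mul_sum_sin_period hω hr hri]
  field_simp

theorem demodulated_average_sub_eq {J : EuclideanSpace ℝ ι → ℝ} (hJ : Continuous J)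
    (hω : ω ≠ 0) (hr : Injective r) (hri : r i ≠ 0) (hαi : α i ≠ 0) (ha : a ≠ 0)
    (θ g : EuclideanSpace ℝ ι) :
    1 / (2 * π / ω) * (∫ t in (0 : ℝ)..2 * π / ω,
        2 / (α i * a) * sin (ω * r i * t) * J (θ + a • unitDither α r ω t)) - g i =
      1 / (2 * π / ω) * ∫ t in (0 : ℝ)..2 * π / ω, 2 / (α i * a) * sin (ω * r i * t) *
        (J (θ + a • unitDither α r ω t) - J θ - inner ℝ g (a • unitDither α r ω t)) := by
  have hconst : ∫ t in (0 : ℝ)..2 * π / ω, 2 / (α i * a) * sin (ω * r i * t) * J θ = 0 := by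
    simp_rw [mul_right_comm _ _ (J θ)]
    rw [integral_const_mul, integral_sin_nat_mul_period hω, mul_zero]
  simp_rw [mul_sub]
  rw [integral_sub ((by fun_prop : Continuous _).intervalIntegrable _ _)
      ((by fun_prop : Continuous _).intervalIntegrable _ _),
    integral_sub ((by fun_prop : Continuous _).intervalIntegrable _ _)
      ((by fun_prop : Continuous _).intervalIntegrable _ _),
    hconst, integral_demod_mul_inner_smul_unitDither hω hr hri hαi ha]
  field_simp
  ring

theorem abs_demodulated_remainder_average_le (hω : 0 < ω) (hαi : α i ≠ 0) (ha : 0 < a)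
    {R : EuclideanSpace ℝ ι → ℝ} {c : ℝ} (hc : 0 ≤ c)
    (hR : ∀ v, ‖v‖ ≤ a * ‖WithLp.toLp 2 α‖ → |R v| ≤ c * ‖v‖) :
    |1 / (2 * π / ω) * ∫ t in (0 : ℝ)..2 * π / ω,
        2 / (α i * a) * sin (ω * r i * t) * R (a • unitDither α r ω t)| ≤
      2 * c * ‖WithLp.toLp 2 α‖ / |α i| := by
  refine abs_average_le_of_abs_le (by positivity) fun t => ?_
  have hs : ‖a • unitDither α r ω t‖ ≤ a * ‖WithLp.toLp 2 α‖ := by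
    rw [norm_smul, Real.norm_of_nonneg ha.le]
    exact mul_le_mul_of_nonneg_left (norm_unitDither_le α r ω t) ha.le
  have hm : |2 / (α i * a) * sin (ω * r i * t)| ≤ 2 / (|α i| * a) := by
    rw [abs_mul, abs_div, abs_mul, abs_of_pos ha, abs_two]
    exact mul_le_of_le_one_right (by positivity) (abs_sin_le_one _)
  have hαi' : 0 < |α i| := abs_pos.2 hαi
  calc _ = |2 / (α i * a) * sin (ω * r i * t)| * |R (a • unitDither α r ω t)| := abs_mul _ _
    _ ≤ 2 / (|α i| * a) * (c * (a * ‖WithLp.toLp 2 α‖)) := by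
      gcongr
      exact (hR _ hs).trans (by gcongr)
    _ = 2 * c * ‖WithLp.toLp 2 α‖ / |α i| := by field_simp

end Demodulation

theorem average_gradient_estimate_converges_general (n : ℕ)
    (J : EuclideanSpace ℝ (Fin n) → ℝ)
    (hJ : ContDiff ℝ 1 J)
    (r : Fin n → ℕ) (hrpos : ∀ i, 0 < r i) (hrinj : Function.Injective r)
    (α : Fin n → ℝ) (hα : ∀ i, α i ≠ 0)
    (ω : ℝ) (hω : 0 < ω)
    (θh : EuclideanSpace ℝ (Fin n)) (i : Fin n) :
    ∀ ε : ℝ, 0 < ε → ∃ δ : ℝ, 0 < δ ∧ ∀ a0 : ℝ, 0 < a0 → a0 < δ →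
      |(1 / (2 * Real.pi / ω)) *
          (∫ t in (0:ℝ)..(2 * Real.pi / ω),
            (2 / (α i * a0)) * Real.sin (ω * (r i : ℝ) * t) *
              J (WithLp.toLp 2 (fun j => θh j + α j * a0 * Real.sin (ω * (r j : ℝ) * t))))
        - gradient J θh i| < ε := by
  intro ε hε
  set A := ‖WithLp.toLp 2 α‖
  have hαi : 0 < |α i| := abs_pos.2 (hα i)
  set c := ε * |α i| / (2 * (A + 1))
  obtain ⟨ρ, hρ, hR⟩ := (hJ.differentiable one_ne_zero θh).hasGradientAt.exists_abs_remainder_le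
    (show 0 < c by positivity)
  refine ⟨ρ / (A + 1), by positivity, fun a ha haρ => ?_⟩
  have hdither : ∀ t, WithLp.toLp 2 (fun j => θh j + α j * a * sin (ω * r j * t)) =
      θh + a • unitDither α r ω t := by
    intro t
    ext j
    simp only [unitDither, PiLp.add_apply, PiLp.smul_apply, smul_eq_mul]
    ring
  simp_rw [hdither]
  rw [demodulated_average_sub_eq hJ.continuous hω.ne' hrinj (hrpos i).ne' (hα i) ha.ne']
  refine (abs_demodulated_remainder_average_le (R := fun v => J (θh + v) - J θh -
      inner ℝ (gradient J θh) v) hω (hα i) ha (by positivity) fun v hv => hR v ?_).trans_lt ?_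
  · rw [lt_div_iff₀ (by positivity)] at haρ
    nlinarith
  · have hratio : 2 * c * A / |α i| = ε * (A / (A + 1)) := by
      simp only [c]
      field_simp
    rw [hratio]
    exact mul_lt_of_lt_one_right hε ((div_lt_one (by positivity)).2 (lt_add_one A))

/-- The average gradient estimate converges to the true partial derivative
as the dither amplitude `a₀` vanishes. -/
theorem average_gradient_estimate_converges (n : ℕ)
    (J : EuclideanSpace ℝ (Fin n) → ℝ)
    (hJ : ContDiff ℝ 1 J)
    (r : Fin n → ℕ) (hrpos : ∀ i, 0 < r i) (hrinj : Function.Injective r)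
    (α : Fin n → ℝ) (hα : ∀ i, α i ≠ 0) (hαsum : ∑ i, (α i) ^ 2 = 1)
    (ω : ℝ) (hω : 0 < ω)
    (θh : EuclideanSpace ℝ (Fin n)) (i : Fin n) :
    ∀ ε : ℝ, 0 < ε → ∃ δ : ℝ, 0 < δ ∧ ∀ a0 : ℝ, 0 < a0 → a0 < δ →
      |(1 / (2 * Real.pi / ω)) *
          (∫ t in (0:ℝ)..(2 * Real.pi / ω),
            (2 / (α i * a0)) * Real.sin (ω * (r i : ℝ) * t) *
              J (WithLp.toLp 2 (fun j => θh j + α j * a0 * Real.sin (ω * (r j : ℝ) * t))))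
        - gradient J θh i| < ε :=
  average_gradient_estimate_converges_general n J hJ r hrpos hrinj α hα ω hω θh i
end

section
/- Let J : ℝⁿ → ℝ be continuously differentiable, coercive (J(θ) → ∞ as ‖θ‖ → ∞), with a unique global minimizer θ* (J(θ*) < J(θ) for all θ ≠ θ*) and ∇J(θ) = 0 if and only if θ = θ*. Let f : ℝⁿ → ℝ be continuous and define, for c ≥ 0, r(c) = max{ |f(θ)| : θ ∈ ℝⁿ, J(θ) − J(θ*) ≤ c }. Then r is well defined (the maximum is attained), monotone nondecreasing, and continuous on [0, ∞). -/
/-!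
The sublevel sets `{J - J θ* ≤ c}` are compact by coercivity, so `r c` is the maximum of the
continuous function `|f|` over a compact set; it is attained and nondecreasing in `c`. Right
continuity holds for any continuous `J` with compact sublevel sets: an open set containing
`{J ≤ c}` already contains `{J ≤ d}` for some `d > c`. Left continuity at `c > 0` comes from the
absence of local minima other than `θ*` (a local minimum is a critical point), which makes every
point of `{J ≤ c}` a limit of points of `{J < c}`.
-/

open Set Filter Topology

theorem isCompact_setOf_le_of_coercive {E : Type*} [NormedAddCommGroup E] [ProperSpace E]
    {J : E → ℝ} (hJ : Continuous J) (hcoercive : ∀ M : ℝ, ∃ R : ℝ, ∀ x : E, R ≤ ‖x‖ → M ≤ J x)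
    (c : ℝ) : IsCompact {x | J x ≤ c} := by
  obtain ⟨R, hR⟩ := hcoercive (c + 1)
  refine (isCompact_closedBall (0 : E) R).of_isClosed_subset (isClosed_le hJ continuous_const)
    fun x hx => ?_
  rw [mem_closedBall_zero_iff]
  by_contra! hRx
  linarith [hR x hRx.le, show J x ≤ c from hx]

theorem mem_closure_setOf_lt_of_not_isLocalMin {X : Type*} [TopologicalSpace X] {J : X → ℝ}
    {x : X} (h : ¬IsLocalMin J x) : x ∈ closure {y | J y < J x} := by
  simpa [mem_closure_iff_frequently, IsLocalMin, IsMinFilter, Filter.not_eventually] using h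

theorem eq_of_isLocalMin_of_gradient_eq_zero_iff {F : Type*} [NormedAddCommGroup F]
    [InnerProductSpace ℝ F] [CompleteSpace F] {J : F → ℝ} {θs θ : F}
    (hgrad : ∀ y, gradient J y = 0 ↔ y = θs) (h : IsLocalMin J θ) : θ = θs :=
  (hgrad θ).1 (by rw [gradient, h.fderiv_eq_zero, map_zero])

noncomputable def sublevelSup {X : Type*} (J g : X → ℝ) (c : ℝ) : ℝ :=
  sSup (g '' {x | J x ≤ c})

section SublevelSup

variable {X : Type*} [TopologicalSpace X] {J g : X → ℝ} {c₀ c d : ℝ}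

theorem le_sublevelSup (hg : Continuous g) (hK : IsCompact {x | J x ≤ c}) {x : X}
    (hx : J x ≤ c) : g x ≤ sublevelSup J g c :=
  le_csSup (hK.image hg).bddAbove (mem_image_of_mem g hx)

theorem exists_eq_sublevelSup (hg : Continuous g) (hK : IsCompact {x | J x ≤ c})
    (hne : {x | J x ≤ c}.Nonempty) : ∃ x, J x ≤ c ∧ g x = sublevelSup J g c :=
  (hK.image hg).sSup_mem (hne.image g)

theorem sublevelSup_le_sublevelSup (hg : Continuous g) (hK : ∀ c, IsCompact {x | J x ≤ c})
    (hne : {x | J x ≤ c}.Nonempty) (hcd : c ≤ d) : sublevelSup J g c ≤ sublevelSup J g d := by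
  obtain ⟨x, hxc, hx⟩ := exists_eq_sublevelSup hg (hK c) hne
  exact hx ▸ le_sublevelSup hg (hK d) (hxc.trans hcd)

theorem exists_gt_setOf_le_subset (hJ : Continuous J) (hK : IsCompact {x | J x ≤ c + 1})
    {U : Set X} (hU : IsOpen U) (hcU : {x | J x ≤ c} ⊆ U) :
    ∃ d > c, {x | J x ≤ d} ⊆ U := by
  obtain ⟨a, hca, ha⟩ := (hK.diff hU).exists_forall_le' hJ.continuousOn
    fun x hx => lt_of_not_ge fun hxc => hx.2 (hcU hxc)
  obtain ⟨d, hcd, hd⟩ := exists_between (lt_min (lt_add_one c) hca)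
  refine ⟨d, hcd, fun x hx => by_contra fun hxU => ?_⟩
  have hxd : J x ≤ d := hx
  linarith [ha x ⟨hxd.trans (hd.le.trans (min_le_left _ _)), hxU⟩, min_le_right (c + 1) a]

theorem eventually_sublevelSup_lt (hJ : Continuous J) (hg : Continuous g)
    (hK : ∀ c, IsCompact {x | J x ≤ c}) (hne : {x | J x ≤ c₀}.Nonempty) {u : ℝ}
    (hu : sublevelSup J g c < u) : ∀ᶠ d in 𝓝[Ici c₀] c, sublevelSup J g d < u := by
  obtain ⟨d₀, hcd₀, hd₀⟩ :=
    exists_gt_setOf_le_subset hJ (hK (c + 1)) (isOpen_lt hg continuous_const)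
      fun x hx => (le_sublevelSup hg (hK c) hx).trans_lt hu
  filter_upwards [self_mem_nhdsWithin, nhdsWithin_le_nhds (eventually_lt_nhds hcd₀)]
    with d hd hdd₀
  obtain ⟨x, hxd, hx⟩ := exists_eq_sublevelSup hg (hK d)
    (hne.mono (ofPred_subset_ofPred.2 fun _ hy => hy.trans hd))
  exact hx ▸ hd₀ (hxd.trans hdd₀.le)

theorem eventually_lt_sublevelSup (hg : Continuous g) (hK : ∀ c, IsCompact {x | J x ≤ c})
    (hcl : ∀ c > c₀, {x | J x ≤ c} ⊆ closure {x | J x < c}) {l : ℝ} (hc : c₀ ≤ c)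
    (hne : {x | J x ≤ c}.Nonempty)
    (hl : l < sublevelSup J g c) : ∀ᶠ d in 𝓝[Ici c₀] c, l < sublevelSup J g d := by
  obtain ⟨x, hxc, hx⟩ := exists_eq_sublevelSup hg (hK c) hne
  rcases hc.eq_or_lt with rfl | hc
  · filter_upwards [self_mem_nhdsWithin] with d hd
    exact hl.trans_le (hx ▸ le_sublevelSup hg (hK d) (hxc.trans hd))
  · obtain ⟨y, hyl, hyc⟩ : ∃ y, l < g y ∧ J y < c :=
      mem_closure_iff_nhds.1 (hcl c hc hxc) _
        ((isOpen_lt continuous_const hg).mem_nhds (hx ▸ hl :))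
    filter_upwards [nhdsWithin_le_nhds (eventually_gt_nhds hyc)] with d hd
    exact hyl.trans_le (le_sublevelSup hg (hK d) hd.le)

theorem continuousOn_sublevelSup (hJ : Continuous J) (hg : Continuous g)
    (hK : ∀ c, IsCompact {x | J x ≤ c}) (hne : {x | J x ≤ c₀}.Nonempty)
    (hcl : ∀ c > c₀, {x | J x ≤ c} ⊆ closure {x | J x < c}) :
    ContinuousOn (sublevelSup J g) (Ici c₀) := fun _ hc =>
  tendsto_order.2 ⟨fun _ hl => eventually_lt_sublevelSup hg hK hcl hc
      (hne.mono (ofPred_subset_ofPred.2 fun _ hx => hx.trans hc)) hl,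
    fun _ hu => eventually_sublevelSup_lt hJ hg hK hne hu⟩

end SublevelSup

theorem bounding_ball_radius_general (n : ℕ)
    (J : EuclideanSpace ℝ (Fin n) → ℝ) (θs : EuclideanSpace ℝ (Fin n))
    (hJ : ContDiff ℝ 1 J)
    (hgrad : ∀ θ, gradient J θ = 0 ↔ θ = θs)
    (hcoercive : ∀ M : ℝ, ∃ R : ℝ, ∀ θ : EuclideanSpace ℝ (Fin n), R ≤ ‖θ‖ → M ≤ J θ)
    (f : EuclideanSpace ℝ (Fin n) → ℝ) (hf : Continuous f) :
    ∃ r : ℝ → ℝ,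
      (∀ c : ℝ, 0 ≤ c →
        (∃ θ : EuclideanSpace ℝ (Fin n), J θ - J θs ≤ c ∧ |f θ| = r c) ∧
        (∀ θ : EuclideanSpace ℝ (Fin n), J θ - J θs ≤ c → |f θ| ≤ r c)) ∧
      MonotoneOn r (Set.Ici (0 : ℝ)) ∧
      ContinuousOn r (Set.Ici (0 : ℝ)) := by
  set V := fun θ => J θ - J θs
  have hV : Continuous V := hJ.continuous.sub continuous_const
  have hK : ∀ c, IsCompact {θ | V θ ≤ c} := fun c => by
    simpa only [V, sub_le_iff_le_add] using
      isCompact_setOf_le_of_coercive hJ.continuous hcoercive (c + J θs)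
  have hne : ∀ c, 0 ≤ c → {θ | V θ ≤ c}.Nonempty := fun c hc => ⟨θs, by simpa [V] using hc⟩
  have hcl : ∀ c > 0, {θ | V θ ≤ c} ⊆ closure {θ | V θ < c} := by
    intro c hc θ hθ
    rcases (show V θ ≤ c from hθ).lt_or_eq with hlt | rfl
    · exact subset_closure hlt
    · have hθs : θ ≠ θs := by rintro rfl; simp [V] at hc
      simpa [V] using mem_closure_setOf_lt_of_not_isLocalMin
        (mt (eq_of_isLocalMin_of_gradient_eq_zero_iff hgrad) hθs)
  have hg : Continuous fun θ => |f θ| := hf.abs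
  refine ⟨sublevelSup V fun θ => |f θ|, fun c hc => ⟨?_, fun θ hθ => ?_⟩, ?_, ?_⟩
  · exact exists_eq_sublevelSup hg (hK c) (hne c hc)
  · exact le_sublevelSup hg (hK c) hθ
  · exact fun a ha b _ hab => sublevelSup_le_sublevelSup hg hK (hne a ha) hab
  · exact continuousOn_sublevelSup hV hg hK (hne 0 le_rfl) hcl

/-- The bounding-ball radius `r(c) = max {|f(θ)| : J(θ) - J(θ*) ≤ c}` is
well defined (the maximum is attained), monotone nondecreasing, and continuous on
`[0, ∞)`. -/
theorem bounding_ball_radius (n : ℕ)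
    (J : EuclideanSpace ℝ (Fin n) → ℝ) (θs : EuclideanSpace ℝ (Fin n))
    (hJ : ContDiff ℝ 1 J)
    (hmin : ∀ θ, θ ≠ θs → J θs < J θ)
    (hgrad : ∀ θ, gradient J θ = 0 ↔ θ = θs)
    (hcoercive : ∀ M : ℝ, ∃ R : ℝ, ∀ θ : EuclideanSpace ℝ (Fin n), R ≤ ‖θ‖ → M ≤ J θ)
    (f : EuclideanSpace ℝ (Fin n) → ℝ) (hf : Continuous f) :
    ∃ r : ℝ → ℝ,
      (∀ c : ℝ, 0 ≤ c →
        (∃ θ : EuclideanSpace ℝ (Fin n), J θ - J θs ≤ c ∧ |f θ| = r c) ∧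
        (∀ θ : EuclideanSpace ℝ (Fin n), J θ - J θs ≤ c → |f θ| ≤ r c)) ∧
      MonotoneOn r (Set.Ici (0 : ℝ)) ∧
      ContinuousOn r (Set.Ici (0 : ℝ)) :=
  bounding_ball_radius_general n J θs hJ hgrad hcoercive f hf
end
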